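/- Let A be a deterministic NSA with limited erasing accepting by final state and empty stack the word problem of a group G with respect to generators Σ. Then any two computation paths in the configuration graph 𝒞 from the initial configuration (q₀, T₀) to the same configuration (q, T) have labels representing the same element of G; consequently there is a well-defined labeled-graph homomorphism φ : 𝒞 → 𝒟, where 𝒟 is the Cayley diagram of G augmented with an ε-loop at each vertex, sending a configuration to the group element represented by the label of any path from (q₀, T₀) to it. -/

import Mathlib

/-! ### Nested stack automata -/

/-- A finite ordered rooted tree with edge labels in `Ξ`
(children listed in order; the last child is the latest). -/
inductive MTree (Ξ : Type) : Type
  | node (children : List (Ξ × MTree Ξ)) : MTree Ξ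

namespace MTree

variable {Ξ : Type}

/-- The list of children (with inedge labels) of the root. -/
def children : MTree Ξ → List (Ξ × MTree Ξ)
  | node cs => cs

/-- The subtree at depth `n` along the spine (the chain of latest children from the root,
which is the path from the root to the latest vertex). -/
def spine : ℕ → MTree Ξ → Option (MTree Ξ)
  | 0, t => some t
  | n + 1, t => t.children.getLast?.bind fun p => spine n p.2

/-- The label of the inedge to the spine vertex at depth `n` (`none` for the root). -/
def labelTo (t : MTree Ξ) : ℕ → Option Ξ
  | 0 => none
  | n + 1 => (spine n t).bind fun s => s.children.getLast?.map Prod.fst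

/-- Modify the subtree at depth `n` along the spine. -/
def modify : ℕ → (MTree Ξ → Option (MTree Ξ)) → MTree Ξ → Option (MTree Ξ)
  | 0, f, t => f t
  | n + 1, f, t =>
    match t.children.getLast? with
    | some (x, c) => (modify n f c).map fun c' => node (t.children.dropLast ++ [(x, c')])
    | none => none

mutual
  /-- The number of edges of a memory tree. -/
  def esize : MTree Ξ → ℕ
    | node cs => esizeList cs
  /-- The total number of edges in a forest. -/
  def esizeList : List (Ξ × MTree Ξ) → ℕ
    | [] => 0
    | (_, t) :: rest => t.esize + 1 + esizeList rest
end

end MTree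

/-- A memory configuration: a memory tree together with the depth of the distinguished
vertex along the spine (the path from the root to the latest vertex). -/
def MCfg (Ξ : Type) : Type := MTree Ξ × ℕ

/-- The empty memory: the one-vertex tree with the root distinguished. -/
def MCfg.initial (Ξ : Type) : MCfg Ξ := (MTree.node [], 0)

/-- The generators of the monoid of memory operations of a nested stack automaton:
the identity, move-down `D x`, move-up `U x` (with `x = none` standing for `ε`,
the inedge label of the root), push `P x` and pop `Q x`. -/
inductive NSAOp (Ξ : Type) : Type
  | id : NSAOp Ξ
  | D (x : Ξ) : NSAOp Ξ
  | U (x : Option Ξ) : NSAOp Ξ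
  | P (x : Ξ) : NSAOp Ξ
  | Q (x : Ξ) : NSAOp Ξ

namespace NSAOp

variable {Ξ : Type}

open scoped Classical in
/-- The partial action of a memory operation on memory configurations.
`D x` moves the distinguished vertex to its parent (defined when the inedge label is `x`
and it is not the root); `U x` moves it to its latest child (defined when the inedge label
of the current vertex is `x`, with `x = ε` exactly at the root, and it is not a leaf);
`P x` attaches a new latest edge labelled `x` at the distinguished vertex and distinguishes
the new leaf; `Q x` deletes the distinguished vertex when it is a leaf (not the root) with
inedge label `x`, distinguishing its parent. -/
noncomputable def apply : NSAOp Ξ → MCfg Ξ → Option (MCfg Ξ)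
  | .id, c => some c
  | .D x, (t, n) => if 1 ≤ n ∧ t.labelTo n = some x then some (t, n - 1) else none
  | .U x, (t, n) =>
      if t.labelTo n = x ∧ (∃ s, t.spine n = some s ∧ s.children ≠ []) then some (t, n + 1)
      else none
  | .P x, (t, n) =>
      (t.modify n fun s => some (.node (s.children ++ [(x, .node [])]))).map
        fun t' => (t', n + 1)
  | .Q x, (t, n) =>
      if 1 ≤ n ∧ t.labelTo n = some x ∧ t.spine n = some (.node []) then
        (t.modify (n - 1) fun s => some (.node s.children.dropLast)).map fun t' => (t', n - 1)
      else none

/-- Whether an operation is a pop (erasing) operation. -/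
def isPop : NSAOp Ξ → Bool
  | .Q _ => true
  | _ => false

end NSAOp

/-- A nested stack automaton over the input alphabet `A`: a finite directed graph with a
designated initial vertex and designated final vertices, whose edges are labelled by pairs
of a memory operation and an input letter from `A ∪ {ε}` (`ε` is `none`).  The memory
alphabet is fixed to be the countable alphabet `ℕ`. -/
structure NSA (A : Type) : Type 1 where
  Q : Type
  finQ : Finite Q
  init : Q
  final : Set Q
  edges : Set (Q × NSAOp ℕ × Option A × Q)
  finEdges : edges.Finite

namespace NSA

variable {A : Type} (M : NSA A)

/-- A configuration: an internal state together with a memory configuration. -/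
abbrev Cfg := M.Q × MCfg ℕ

/-- The initial configuration. -/
def initCfg : M.Cfg := (M.init, MCfg.initial ℕ)

/-- One move: an edge of the automaton whose memory operation is defined at the current
memory, reading the input letter `a` (`none` meaning `ε`). -/
def CStep (c : M.Cfg) (a : Option A) (c' : M.Cfg) : Prop :=
  ∃ op : NSAOp ℕ, (c.1, op, a, c'.1) ∈ M.edges ∧ op.apply c.2 = some c'.2

/-- A finite sequence of moves, recording the sequence of input letters. -/
inductive Steps : M.Cfg → List (Option A) → M.Cfg → Prop
  | nil (c : M.Cfg) : Steps c [] c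
  | cons {c : M.Cfg} {a : Option A} {c' : M.Cfg} {l : List (Option A)} {c'' : M.Cfg} :
      M.CStep c a c' → Steps c' l c'' → Steps c (a :: l) c''

/-- Acceptance by final state and empty memory. -/
def Accepts (w : List A) : Prop :=
  ∃ (l : List (Option A)) (qf : M.Q), qf ∈ M.final ∧ l.reduceOption = w ∧
    M.Steps M.initCfg l (qf, MCfg.initial ℕ)

/-- The language accepted by the automaton. -/
def Lang : Set (List A) := {w | M.Accepts w}

/-- A configuration is accessible if it is the outcome of a computation which extends to a
successful (accepting) one. -/
def Accessible (c : M.Cfg) : Prop :=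
  (∃ l : List (Option A), M.Steps M.initCfg l c) ∧
  ∃ (l' : List (Option A)) (qf : M.Q), qf ∈ M.final ∧ M.Steps c l' (qf, MCfg.initial ℕ)

/-- Determinism: each combination of state, memory and input letter admits at most one
applicable move (where `ε`-moves conflict with every letter). -/
def Deterministic : Prop :=
  ∀ (q : M.Q) (T : MCfg ℕ) (a : A) (e₁ e₂ : M.Q × NSAOp ℕ × Option A × M.Q),
    e₁ ∈ M.edges → e₂ ∈ M.edges → e₁.1 = q → e₂.1 = q →
    (e₁.2.2.1 = some a ∨ e₁.2.2.1 = none) → (e₂.2.2.1 = some a ∨ e₂.2.2.1 = none) →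
    (e₁.2.1.apply T).isSome → (e₂.2.1.apply T).isSome → e₁ = e₂

/-- Limited erasing: there is `k` such that every path in the underlying graph all of whose
input labels are `ε` contains at most `k` pop operations. -/
def LimitedErasing : Prop :=
  ∃ k : ℕ, ∀ p : List (M.Q × NSAOp ℕ × Option A × M.Q),
    (∀ e ∈ p, e ∈ M.edges) → p.Chain' (fun e e' => e.2.2.2 = e'.1) →
    (∀ e ∈ p, e.2.2.1 = (none : Option A)) →
    p.countP (fun e => e.2.1.isPop) ≤ k

/-- A path in the configuration graph (all its vertices are accessible configurations). -/
inductive CPath : M.Cfg → List (Option A) → M.Cfg → Prop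
  | nil {c : M.Cfg} : M.Accessible c → CPath c [] c
  | cons {c : M.Cfg} {a : Option A} {c' : M.Cfg} {l : List (Option A)} {c'' : M.Cfg} :
      M.Accessible c → M.CStep c a c' → CPath c' l c'' → CPath c (a :: l) c''

/-- A path of `n` consecutive `ε`-labelled edges in the configuration graph. -/
def EPathN : ℕ → M.Cfg → M.Cfg → Prop
  | 0, c, c' => c = c'
  | n + 1, c, c'' => ∃ c' : M.Cfg, M.Accessible c' ∧ M.CStep c none c' ∧ EPathN n c' c''

end NSA

/-- `L` is accepted (by final state and empty memory) by some deterministic nested stack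
automaton with limited erasing. -/
def IsDetLimNSALang {A : Type} (L : Set (List A)) : Prop :=
  ∃ M : NSA A, M.Deterministic ∧ M.LimitedErasing ∧ M.Lang = L

/-! Every configuration `c` of the configuration graph is accessible, so some input `u` leads
from `c` to acceptance. If `w` and `w'` label paths from the initial configuration to `c`, then
`wu` and `w'u` are both accepted, hence lie in the word problem, and `σ w = (σ u)⁻¹ = σ w'`.
So `σ` of a path label depends only on the endpoint, and appending an edge labelled `a`
multiplies it by `σ a`. -/

namespace NSA

open FreeMonoid

variable {A : Type} {M : NSA A}

theorem Steps.append {c c' c'' : M.Cfg} {l l' : List (Option A)}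
    (h : M.Steps c l c') (h' : M.Steps c' l' c'') : M.Steps c (l ++ l') c'' := by
  induction h with
  | nil => exact h'
  | cons s _ ih => exact .cons s (ih h')

theorem Steps.cpath {c c' : M.Cfg} {l : List (Option A)} (h : M.Steps c l c')
    (hc : ∃ l₀ : List (Option A), M.Steps M.initCfg l₀ c)
    (hc' : ∃ (l' : List (Option A)) (qf : M.Q), qf ∈ M.final ∧
      M.Steps c' l' (qf, MCfg.initial ℕ)) : M.CPath c l c' := by
  induction h with
  | nil => exact .nil ⟨hc, hc'⟩
  | @cons _ a _ _ _ s st ih =>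
    obtain ⟨l₀, hl₀⟩ := hc
    obtain ⟨l', qf, hqf, hl'⟩ := hc'
    refine .cons ⟨⟨l₀, hl₀⟩, _, qf, hqf, (Steps.cons s st).append hl'⟩ s ?_
    exact ih ⟨l₀ ++ [a], hl₀.append (.cons s (.nil _))⟩ ⟨l', qf, hqf, hl'⟩

theorem CPath.steps {c c' : M.Cfg} {l : List (Option A)} (h : M.CPath c l c') :
    M.Steps c l c' := by
  induction h with
  | nil => exact .nil _
  | cons _ s _ ih => exact .cons s ih

theorem CPath.accessible_source {c c' : M.Cfg} {l : List (Option A)} (h : M.CPath c l c') :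
    M.Accessible c := by
  cases h <;> assumption

theorem CPath.accessible_target {c c' : M.Cfg} {l : List (Option A)} (h : M.CPath c l c') :
    M.Accessible c' := by
  induction h with
  | nil h => exact h
  | cons _ _ _ ih => exact ih

theorem CPath.snoc {c c' c'' : M.Cfg} {l : List (Option A)} {a : Option A}
    (h : M.CPath c l c') (s : M.CStep c' a c'') (hc'' : M.Accessible c'') :
    M.CPath c (l ++ [a]) c'' := by
  induction h with
  | nil h => exact .cons h s (.nil hc'')
  | cons hacc st _ ih => exact .cons hacc st (ih s)

theorem Accessible.exists_cpath {c : M.Cfg} (hc : M.Accessible c) :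
    ∃ l : List (Option A), M.CPath M.initCfg l c :=
  let ⟨⟨l, hl⟩, hco⟩ := hc
  ⟨l, hl.cpath ⟨[], .nil _⟩ hco⟩

variable {G : Type} [Group G] {σ : FreeMonoid A →* G}

theorem CPath.map_label_eq (hL : ∀ w ∈ M.Lang, σ (ofList w) = 1) {c : M.Cfg}
    {l l' : List (Option A)} (h : M.CPath M.initCfg l c) (h' : M.CPath M.initCfg l' c) :
    σ (ofList l.reduceOption) = σ (ofList l'.reduceOption) := by
  obtain ⟨u, qf, hqf, hu⟩ := h.accessible_target.2
  have inverse_of_completion : ∀ l₀, M.CPath M.initCfg l₀ c →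
      σ (ofList l₀.reduceOption) * σ (ofList u.reduceOption) = 1 := fun l₀ h₀ => by
    have := hL _ ⟨l₀ ++ u, qf, hqf, rfl, h₀.steps.append hu⟩
    rwa [List.reduceOption_append, ofList_append, map_mul] at this
  exact mul_right_cancel ((inverse_of_completion l h).trans (inverse_of_completion l' h').symm)

variable (σ) in
open scoped Classical in
noncomputable def cayleyMap (c : M.Cfg) : G :=
  if h : ∃ l, M.CPath M.initCfg l c then σ (ofList h.choose.reduceOption) else 1

theorem cayleyMap_eq (hL : ∀ w ∈ M.Lang, σ (ofList w) = 1) {c : M.Cfg}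
    {l : List (Option A)} (h : M.CPath M.initCfg l c) :
    cayleyMap σ c = σ (ofList l.reduceOption) := by
  have hex : ∃ l, M.CPath M.initCfg l c := ⟨l, h⟩
  rw [cayleyMap, dif_pos hex]
  exact hex.choose_spec.map_label_eq hL h

theorem cayleyMap_initCfg (hL : ∀ w ∈ M.Lang, σ (ofList w) = 1) :
    cayleyMap σ M.initCfg = 1 := by
  by_cases hex : ∃ l, M.CPath M.initCfg l M.initCfg
  · obtain ⟨l, h⟩ := hex
    simpa using cayleyMap_eq hL (.nil h.accessible_source)
  · rw [cayleyMap, dif_neg hex]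

theorem cayleyMap_of_cstep (hL : ∀ w ∈ M.Lang, σ (ofList w) = 1) {c c' : M.Cfg}
    {a : Option A} (hc : M.Accessible c) (hc' : M.Accessible c') (s : M.CStep c a c') :
    cayleyMap σ c' = cayleyMap σ c * σ (ofList a.toList) := by
  obtain ⟨l, h⟩ := hc.exists_cpath
  rw [cayleyMap_eq hL (h.snoc s hc'), cayleyMap_eq hL h, List.reduceOption_append,
    List.reduceOption_singleton, ofList_append, map_mul]

end NSA

open FreeMonoid in
/-- Any two paths in the configuration graph from the initial configuration to the same
configuration have labels representing the same element of `G`; consequently there is a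
labelled-graph homomorphism from the configuration graph to the augmented Cayley diagram
of `G`, sending a configuration to the group element represented by the label of any path
from the initial configuration to it. -/
theorem configurationGraph_covering {A G : Type} [Fintype A] [Group G]
    (σ : FreeMonoid A →* G) (hσ : Function.Surjective σ)
    (inv : A → A) (hinv : ∀ a, σ (of (inv a)) = (σ (of a))⁻¹)
    (M : NSA A) (hdet : M.Deterministic) (hlim : M.LimitedErasing)
    (hlang : M.Lang = {w : List A | σ (ofList w) = 1}) :
    (∀ (c : M.Cfg) (l l' : List (Option A)),
      M.CPath M.initCfg l c → M.CPath M.initCfg l' c →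
      σ (ofList l.reduceOption) = σ (ofList l'.reduceOption)) ∧
    ∃ φ : M.Cfg → G, φ M.initCfg = 1 ∧
      (∀ (c : M.Cfg) (l : List (Option A)), M.CPath M.initCfg l c →
        φ c = σ (ofList l.reduceOption)) ∧
      ∀ (c c' : M.Cfg) (a : Option A), M.Accessible c → M.Accessible c' →
        M.CStep c a c' → φ c' = φ c * σ (ofList a.toList) := by
  have hL : ∀ w ∈ M.Lang, σ (ofList w) = 1 := fun w hw => by rwa [hlang] at hw
  exact ⟨fun _ _ _ => NSA.CPath.map_label_eq hL, NSA.cayleyMap σ, NSA.cayleyMap_initCfg hL,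
    fun _ _ => NSA.cayleyMap_eq hL, fun _ _ _ hc hc' => NSA.cayleyMap_of_cstep hL hc hc'⟩
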